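/- Let G and H be graphs and let v be a simplicial vertex of G. Then γ_gr(G ⊠ H) ≤ γ_gr(H) + γ_gr((G − v) ⊠ H). -/

import Mathlib

open SimpleGraph

/-- The closed neighborhood of a vertex. -/
def closedNbhd {V : Type*} (G : SimpleGraph V) (v : V) : Set V :=
  insert v (G.neighborSet v)

/-- A legal (closed neighborhood) sequence: distinct vertices, each dominating
a vertex not dominated by its predecessors. -/
def IsLegalSeq {V : Type*} (G : SimpleGraph V) (l : List V) : Prop :=
  l.Nodup ∧ ∀ i : Fin l.length, ∃ u, u ∈ closedNbhd G (l.get i) ∧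
    ∀ j : Fin l.length, (j : ℕ) < (i : ℕ) → u ∉ closedNbhd G (l.get j)

/-- A dominating sequence: a legal sequence whose vertex set dominates the graph. -/
def IsDomSeq {V : Type*} (G : SimpleGraph V) (l : List V) : Prop :=
  IsLegalSeq G l ∧ ∀ v : V, ∃ u ∈ l, v ∈ closedNbhd G u

/-- The Grundy domination number: maximum length of a dominating sequence. -/
noncomputable def grundyDomNum {V : Type*} (G : SimpleGraph V) : ℕ :=
  sSup {n | ∃ l : List V, IsDomSeq G l ∧ l.length = n}

/-- A legal open neighborhood sequence. -/
def IsLegalOpenSeq {V : Type*} (G : SimpleGraph V) (l : List V) : Prop :=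
  l.Nodup ∧ ∀ i : Fin l.length, ∃ u, u ∈ G.neighborSet (l.get i) ∧
    ∀ j : Fin l.length, (j : ℕ) < (i : ℕ) → u ∉ G.neighborSet (l.get j)

/-- A total dominating sequence. -/
def IsTotalDomSeq {V : Type*} (G : SimpleGraph V) (l : List V) : Prop :=
  IsLegalOpenSeq G l ∧ ∀ v : V, ∃ u ∈ l, v ∈ G.neighborSet u

/-- The Grundy total domination number. -/
noncomputable def grundyTotalDomNum {V : Type*} (G : SimpleGraph V) : ℕ :=
  sSup {n | ∃ l : List V, IsTotalDomSeq G l ∧ l.length = n}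

/-- The edge clique cover number: minimum size of a family of cliques covering all edges. -/
noncomputable def edgeCliqueCoverNum {V : Type*} (G : SimpleGraph V) : ℕ :=
  sInf {n | ∃ C : Finset (Set V), C.card = n ∧ (∀ Q ∈ C, G.IsClique Q) ∧
    ∀ u v : V, G.Adj u v → ∃ Q ∈ C, u ∈ Q ∧ v ∈ Q}

/-- The independence number. -/
noncomputable def indepNum {V : Type*} (G : SimpleGraph V) : ℕ :=
  sSup {n | ∃ s : Finset V, (s : Set V).Pairwise (fun u v => ¬ G.Adj u v) ∧ s.card = n}

/-- The lexicographic product of simple graphs. -/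
def lexProd {V W : Type*} (G : SimpleGraph V) (H : SimpleGraph W) : SimpleGraph (V × W) where
  Adj x y := G.Adj x.1 y.1 ∨ (x.1 = y.1 ∧ H.Adj x.2 y.2)
  symm := by
    constructor
    rintro x y (h | ⟨e, h⟩)
    · exact Or.inl h.symm
    · exact Or.inr ⟨e.symm, h.symm⟩
  loopless := by
    constructor
    rintro x (h | ⟨_, h⟩)
    · exact G.irrefl h
    · exact H.irrefl h

/-- The strong product of simple graphs. -/
def strongProd {V W : Type*} (G : SimpleGraph V) (H : SimpleGraph W) : SimpleGraph (V × W) where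
  Adj x y := x ≠ y ∧ (x.1 = y.1 ∨ G.Adj x.1 y.1) ∧ (x.2 = y.2 ∨ H.Adj x.2 y.2)
  symm := by
    constructor
    rintro x y ⟨hne, h1, h2⟩
    refine ⟨hne.symm, ?_, ?_⟩
    · rcases h1 with h | h
      · exact Or.inl h.symm
      · exact Or.inr h.symm
    · rcases h2 with h | h
      · exact Or.inl h.symm
      · exact Or.inr h.symm
  loopless := ⟨fun x h => h.1 rfl⟩

/-- The direct (tensor) product of simple graphs. -/
def directProd {V W : Type*} (G : SimpleGraph V) (H : SimpleGraph W) : SimpleGraph (V × W) where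
  Adj x y := G.Adj x.1 y.1 ∧ H.Adj x.2 y.2
  symm := ⟨fun _ _ h => ⟨h.1.symm, h.2.symm⟩⟩
  loopless := ⟨fun x h => G.irrefl h.1⟩

/-- The boundary of a set of vertices. -/
def boundarySet {V : Type*} (G : SimpleGraph V) (S : Set V) : Set V :=
  {u | u ∉ S ∧ ∃ s ∈ S, G.Adj u s}

/-- `aVal G l` is the number of entries of `l` not adjacent to any earlier entry. -/
def aVal {V : Type*} (G : SimpleGraph V) [DecidableRel G.Adj] (l : List V) : ℕ :=
  (Finset.univ.filter (fun i : Fin l.length =>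
    ∀ j : Fin l.length, (j : ℕ) < (i : ℕ) → ¬ G.Adj (l.get j) (l.get i))).card

/-! Take a legal sequence of `G ⊠ H`, choose a footprint for each of its vertices, and split the
pairs (vertex, footprint) according to whether one of them has `G`-coordinate `v`. Pairs of the
second kind avoid `v` altogether and form a legal sequence of `(G - v) ⊠ H`. Pairs of the first
kind stay legal after projection to `H`: their footprints have `G`-coordinate in `N[v]`, and since
`v` is simplicial, `N[v] ⊆ N[g]` whenever `v ∈ N[g]`, which holds for the `G`-coordinate `g` of
each earlier vertex of this kind. Every legal sequence extends to a dominating one, so the two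
parts are bounded by the respective Grundy domination numbers. -/

theorem mem_closedNbhd {V : Type*} {G : SimpleGraph V} {u w : V} :
    u ∈ closedNbhd G w ↔ u = w ∨ G.Adj w u :=
  Iff.rfl

theorem self_mem_closedNbhd {V : Type*} (G : SimpleGraph V) (w : V) : w ∈ closedNbhd G w :=
  Set.mem_insert w _

theorem SimpleGraph.IsClique.closedNbhd_subset {V : Type*} {G : SimpleGraph V} {v w : V}
    (hv : G.IsClique (G.neighborSet v)) (hw : v ∈ closedNbhd G w) :
    closedNbhd G v ⊆ closedNbhd G w := by
  intro u hu
  rcases mem_closedNbhd.1 hw with rfl | hvw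
  · exact hu
  rcases mem_closedNbhd.1 hu with rfl | hvu
  · exact Or.inr hvw
  by_cases huw : u = w
  · exact Or.inl huw
  · exact Or.inr (hv hvw.symm hvu (Ne.symm huw))

theorem mem_closedNbhd_strongProd {V W : Type*} {G : SimpleGraph V} {H : SimpleGraph W}
    {x y : V × W} :
    x ∈ closedNbhd (strongProd G H) y ↔ x.1 ∈ closedNbhd G y.1 ∧ x.2 ∈ closedNbhd H y.2 := by
  simp only [mem_closedNbhd, strongProd, Prod.ext_iff, G.adj_comm y.1, H.adj_comm y.2]
  tauto

theorem mem_closedNbhd_induce {V : Type*} {G : SimpleGraph V} {s : Set V} {a b : s} :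
    a ∈ closedNbhd (G.induce s) b ↔ (a : V) ∈ closedNbhd G b := by
  simp [mem_closedNbhd, Subtype.ext_iff]

section Footprints

variable {A B : Type*} {K : SimpleGraph A}

/-- A legal sequence `L.map Prod.fst` together with a footprint for each of its vertices. -/
def IsFootprintList (K : SimpleGraph A) (L : List (A × A)) : Prop :=
  (∀ p ∈ L, p.2 ∈ closedNbhd K p.1) ∧ L.Pairwise (fun p q => q.2 ∉ closedNbhd K p.1)

theorem IsFootprintList.sublist {L L' : List (A × A)} (hL : IsFootprintList K L)
    (h : L'.Sublist L) : IsFootprintList K L' :=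
  ⟨fun p hp => hL.1 p (h.subset hp), hL.2.sublist h⟩

theorem IsLegalSeq.exists_isFootprintList {l : List A} (hl : IsLegalSeq K l) :
    ∃ L : List (A × A), L.map Prod.fst = l ∧ IsFootprintList K L := by
  choose u hu hnew using hl.2
  refine ⟨List.ofFn fun i => (l.get i, u i), by simp [List.map_ofFn, Function.comp_def], ?_, ?_⟩
  · simp only [List.mem_ofFn, forall_exists_index]
    rintro _ i rfl
    exact hu i
  · exact List.pairwise_ofFn.2 fun j i hji => hnew i j hji

theorem IsFootprintList.isLegalSeq {L : List (A × A)} (hL : IsFootprintList K L) :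
    IsLegalSeq K (L.map Prod.fst) := by
  have hnodup : (L.map Prod.fst).Nodup :=
    List.pairwise_map.2 <| hL.2.imp_of_mem fun {_ q} _ hq hpq he => hpq (he ▸ hL.1 q hq)
  refine ⟨hnodup, fun i => ?_⟩
  have hi : (i : ℕ) < L.length := by simpa using i.2
  refine ⟨L[i].2, by simpa using hL.1 _ (L.getElem_mem hi), fun j hji => ?_⟩
  simpa using List.pairwise_iff_getElem.1 hL.2 j i (by simpa using j.2) hi hji

theorem IsLegalSeq.append_singleton {l : List A} (hl : IsLegalSeq K l) {w : A}
    (hw : ∀ u ∈ l, w ∉ closedNbhd K u) : IsLegalSeq K (l ++ [w]) := by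
  obtain ⟨L, rfl, hL⟩ := hl.exists_isFootprintList
  have hL' : IsFootprintList K (L ++ [(w, w)]) := by
    refine ⟨?_, List.pairwise_append.2 ⟨hL.2, List.pairwise_singleton _ _, ?_⟩⟩
    · intro p hp
      rcases List.mem_append.1 hp with hp | hp
      · exact hL.1 p hp
      · rw [List.mem_singleton.1 hp]
        exact self_mem_closedNbhd K w
    · intro p hp q hq
      rw [List.mem_singleton.1 hq]
      exact hw p.1 (List.mem_map_of_mem hp)
  simpa using hL'.isLegalSeq

theorem IsLegalSeq.exists_isDomSeq [Finite A] {l : List A} (hl : IsLegalSeq K l) :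
    ∃ l', IsDomSeq K l' ∧ l.length ≤ l'.length := by
  by_cases hdom : ∀ w, ∃ u ∈ l, w ∈ closedNbhd K u
  · exact ⟨l, ⟨hl, hdom⟩, le_rfl⟩
  push Not at hdom
  obtain ⟨w, hw⟩ := hdom
  have hl' := hl.append_singleton hw
  have hlt : l.length < Nat.card A := by simpa using hl'.1.length_le_natCard
  obtain ⟨l', hdom', hlen⟩ := hl'.exists_isDomSeq
  exact ⟨l', hdom', l.length.le_succ.trans (by simpa using hlen)⟩
termination_by Nat.card A - l.length

theorem IsLegalSeq.length_le_grundyDomNum [Finite A] {l : List A} (hl : IsLegalSeq K l) :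
    l.length ≤ grundyDomNum K := by
  obtain ⟨l', hl', hlen⟩ := hl.exists_isDomSeq
  refine hlen.trans (le_csSup ⟨Nat.card A, ?_⟩ ⟨l', hl', rfl⟩)
  rintro _ ⟨m, hm, rfl⟩
  exact hm.1.1.length_le_natCard

theorem IsFootprintList.length_le_grundyDomNum [Finite A] {L : List (A × A)}
    (hL : IsFootprintList K L) : L.length ≤ grundyDomNum K := by
  simpa using hL.isLegalSeq.length_le_grundyDomNum

theorem grundyDomNum_le {n : ℕ} (h : ∀ l, IsDomSeq K l → l.length ≤ n) : grundyDomNum K ≤ n :=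
  csSup_le' fun _ ⟨l, hl, hlen⟩ => hlen ▸ h l hl

theorem isFootprintList_map_iff {K' : SimpleGraph B} {f : B → A}
    (hf : ∀ a b, f a ∈ closedNbhd K (f b) ↔ a ∈ closedNbhd K' b) (L : List (B × B)) :
    IsFootprintList K (L.map (Prod.map f f)) ↔ IsFootprintList K' L := by
  simp only [IsFootprintList, List.forall_mem_map, List.pairwise_map, Prod.map_fst, Prod.map_snd,
    hf]

end Footprints

section StrongProduct

variable {V W : Type*} {G : SimpleGraph V} {H : SimpleGraph W}

theorem IsFootprintList.map_snd_strongProd {v : V} (hv : G.IsClique (G.neighborSet v))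
    {L : List ((V × W) × (V × W))} (hL : IsFootprintList (strongProd G H) L)
    (hLv : ∀ p ∈ L, p.1.1 = v ∨ p.2.1 = v) :
    IsFootprintList H (L.map (Prod.map Prod.snd Prod.snd)) := by
  have hvN : ∀ p ∈ L, v ∈ closedNbhd G p.1.1 ∧ p.2.1 ∈ closedNbhd G v := by
    intro p hp
    have hp' := (mem_closedNbhd_strongProd.1 (hL.1 p hp)).1
    rcases hLv p hp with h | h <;> rw [← h]
    · exact ⟨self_mem_closedNbhd G _, hp'⟩
    · exact ⟨hp', self_mem_closedNbhd G _⟩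
  refine ⟨?_, List.pairwise_map.2 (hL.2.imp_of_mem fun hp hq hpq hH => hpq ?_)⟩
  · simpa only [List.forall_mem_map, Prod.map_fst, Prod.map_snd] using
      fun p hp => (mem_closedNbhd_strongProd.1 (hL.1 p hp)).2
  · exact mem_closedNbhd_strongProd.2
      ⟨hv.closedNbhd_subset (hvN _ hp).1 (hvN _ hq).2, hH⟩

theorem IsFootprintList.length_le_grundyDomNum_induce_strongProd [Finite V] [Finite W]
    (s : Set V) {L : List ((V × W) × (V × W))} (hL : IsFootprintList (strongProd G H) L)
    (hLs : ∀ p ∈ L, p.1.1 ∈ s ∧ p.2.1 ∈ s) :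
    L.length ≤ grundyDomNum (strongProd (G.induce s) H) := by
  let f : s × W → V × W := fun z => (z.1, z.2)
  have hf : ∀ a b, f a ∈ closedNbhd (strongProd G H) (f b) ↔
      a ∈ closedNbhd (strongProd (G.induce s) H) b := by
    simp only [mem_closedNbhd_strongProd, mem_closedNbhd_induce, f, implies_true]
  obtain ⟨L', rfl⟩ : L ∈ Set.range (List.map (Prod.map f f)) := by
    rw [Set.range_list_map]
    rintro ⟨x, u⟩ hp
    exact ⟨((⟨x.1, (hLs _ hp).1⟩, x.2), (⟨u.1, (hLs _ hp).2⟩, u.2)), rfl⟩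
  simpa using ((isFootprintList_map_iff hf L').1 hL).length_le_grundyDomNum

end StrongProduct

theorem stmt_19_general {V W : Type*} [Fintype V] [Fintype W]
    (G : SimpleGraph V) (H : SimpleGraph W) (v : V)
    (hv : G.IsClique (G.neighborSet v)) :
    grundyDomNum (strongProd G H) ≤
      grundyDomNum H + grundyDomNum (strongProd (G.induce {u : V | u ≠ v}) H) := by
  classical
  refine grundyDomNum_le fun l hl => ?_
  obtain ⟨L, rfl, hL⟩ := hl.1.exists_isFootprintList
  let touchesV : (V × W) × (V × W) → Bool := fun p => p.1.1 = v ∨ p.2.1 = v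
  have hH := (hL.sublist (L.filter_sublist (p := touchesV))).map_snd_strongProd hv
    fun p hp => by simpa [touchesV] using (List.mem_filter.1 hp).2
  have hG := (hL.sublist (L.filter_sublist (p := (!touchesV ·))))
    |>.length_le_grundyDomNum_induce_strongProd {u : V | u ≠ v}
      fun p hp => by simpa [touchesV] using (List.mem_filter.1 hp).2
  rw [List.length_map, L.length_eq_length_filter_add touchesV]
  exact add_le_add (by simpa using hH.length_le_grundyDomNum) hG

theorem stmt_19 {V W : Type*} [Fintype V] [Fintype W] [DecidableEq V]
    (G : SimpleGraph V) (H : SimpleGraph W) (v : V)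
    (hv : G.IsClique (G.neighborSet v)) :
    grundyDomNum (strongProd G H) ≤
      grundyDomNum H + grundyDomNum (strongProd (G.induce {u : V | u ≠ v}) H) :=
  stmt_19_general G H v hv
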